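/- Every decorated tree that contains an internal node other than the root has at least one free leaf; moreover, in a decorated tree whose only internal node is the root, all leaves are free leaves. -/

import Mathlib

/-- Rooted plane trees with integer labels on the leaves. -/
inductive DTree where
  | leaf : ℤ → DTree
  | node : List DTree → DTree

mutual
/-- The list of leaf labels of a tree, in left-to-right (prefix traversal) order. -/
def leafLabels : DTree → List ℤ
  | .leaf l => [l]
  | .node ts => leafLabelsList ts
def leafLabelsList : List DTree → List ℤ
  | [] => []
  | t :: ts => leafLabels t ++ leafLabelsList ts
end

/-- The three conditions of decorated trees, for a subtree whose root is at depth `d`: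
leaf labels are at least -1 and strictly less than the depth of their parent;
every internal node of positive depth `d` has a descendant leaf labeled at most `d - 2`;
and in any direct subtree of an internal node of depth `d`, a leaf labeled `d` is
preceded in traversal order only by leaves labeled at least `d`. -/
inductive DecoAt : DTree → ℕ → Prop where
  | leaf {l : ℤ} {d : ℕ} (h1 : -1 ≤ l) (h2 : l < (d : ℤ) - 1) : DecoAt (.leaf l) d
  | node {ts : List DTree} {d : ℕ} (hne : ts ≠ [])
      (h2 : 0 < d → ∃ x ∈ leafLabelsList ts, x ≤ (d : ℤ) - 2)
      (h3 : ∀ t' ∈ ts, ∀ a b, leafLabels t' = a ++ (d : ℤ) :: b → ∀ x ∈ a, (d : ℤ) ≤ x)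
      (h4 : ∀ t' ∈ ts, DecoAt t' (d + 1)) : DecoAt (.node ts) d

/-- A decorated tree: the root is at depth 0. -/
def IsDeco (T : DTree) : Prop := DecoAt T 0

/-- The number of free leaves (leaves labeled -1). -/
def fl (T : DTree) : ℕ := (leafLabels T).count (-1)

mutual
/-- Increment leaf labels, where the counter `m` is the number of free leaves (from
the left) that still must be incremented; once it reaches 0, remaining free leaves
are left untouched. Returns the new tree and the remaining counter. -/
def incUpTo : DTree → ℕ → DTree × ℕ
  | .leaf l, m =>
      if l = -1 then (if 0 < m then (.leaf 0, m - 1) else (.leaf (-1), m))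
      else (.leaf (l + 1), m)
  | .node ts, m =>
      let p := incList ts m
      (.node p.1, p.2)
def incList : List DTree → ℕ → List DTree × ℕ
  | [], m => ([], m)
  | t :: ts, m =>
      let p := incUpTo t m
      let q := incList ts p.2
      (p.1 :: q.1, q.2)
end

/-- Δ_T(T,i): attach `T` under a new root vertex and add 1 to every leaf label,
except for the last `i` free leaves (in traversal order). -/
def deltaT (T : DTree) (i : ℕ) : DTree := .node [(incUpTo T (fl T - i)).1]

mutual
/-- Subtract 1 from every non-free leaf label. -/
def decLeaves : DTree → DTree
  | .leaf l => if l = -1 then .leaf (-1) else .leaf (l - 1)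
  | .node ts => .node (decList ts)
def decList : List DTree → List DTree
  | [] => []
  | t :: ts => decLeaves t :: decList ts
end

/-- Π_T: remove the root (which has a unique child) and subtract 1 from every
non-free leaf label. -/
def piT : DTree → DTree
  | .node [t] => decLeaves t
  | t => t

/-! Every leaf of a decorated tree sits at depth at least 1, where the label bound `l < d - 1`
leaves only the value `-1`; every internal child of the root must have a descendant leaf
labeled at most `1 - 2 = -1`, which is therefore a free leaf. -/

lemma mem_leafLabelsList {x : ℤ} {ts : List DTree} :
    x ∈ leafLabelsList ts ↔ ∃ t ∈ ts, x ∈ leafLabels t := by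
  induction ts with
  | nil => simp [leafLabelsList]
  | cons t ts ih => simp [leafLabelsList, ih]

namespace DecoAt

lemma neg_one_le {t : DTree} {d : ℕ} (h : DecoAt t d) : ∀ x ∈ leafLabels t, -1 ≤ x := by
  induction h with
  | leaf h1 => simpa [leafLabels] using h1
  | node _ _ _ _ ih =>
    intro x hx
    obtain ⟨t', ht', hxt⟩ := mem_leafLabelsList.mp hx
    exact ih t' ht' x hxt

lemma leaf_eq_neg_one_of_depth_one {l : ℤ} (h : DecoAt (.leaf l) 1) : l = -1 := by
  rcases h with ⟨h1, h2⟩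
  omega

lemma neg_one_mem_of_depth_one {ts : List DTree} (h : DecoAt (.node ts) 1) :
    -1 ∈ leafLabels (.node ts) := by
  have hge := h.neg_one_le
  rcases h with _ | ⟨_, hlow, _, _⟩
  obtain ⟨x, hx, hxle⟩ := hlow one_pos
  obtain rfl : x = -1 := le_antisymm (by simpa using hxle) (hge x hx)
  exact hx

end DecoAt

theorem stmt5 (ts : List DTree) (h : IsDeco (.node ts)) :
    ((¬ ∀ t ∈ ts, ∃ l, t = DTree.leaf l) → 0 < fl (.node ts)) ∧
    ((∀ t ∈ ts, ∃ l, t = DTree.leaf l) → ∀ x ∈ leafLabels (.node ts), x = -1) := by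
  rcases h with _ | ⟨_, _, _, hchild⟩
  constructor
  · intro hinternal
    obtain ⟨t, ht, hnotleaf⟩ := not_forall₂.mp hinternal
    cases t with
    | leaf l => exact absurd ⟨l, rfl⟩ hnotleaf
    | node ts' =>
      have hfree := (hchild _ ht).neg_one_mem_of_depth_one
      exact List.count_pos_iff.mpr (mem_leafLabelsList.mpr ⟨_, ht, hfree⟩)
  · intro hleaves x hx
    obtain ⟨t, ht, hxt⟩ := mem_leafLabelsList.mp hx
    obtain ⟨l, rfl⟩ := hleaves t ht
    obtain rfl : x = l := by simpa [leafLabels] using hxt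
    exact (hchild _ ht).leaf_eq_neg_one_of_depth_one
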